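/- arXiv:2012.01617 — 5 statements merged into one kernel-verified Lean document; each statement's English description precedes it below -/
import Mathlib

section
/- Let $I$ be an ideal of a commutative ring such that the symbolic Rees algebra of $I$ is generated in degrees at most $d$, i.e., for all $n \geq 1$, $I^{(n)} = \sum_{a_1 + 2a_2 + \cdots + d a_d = n} I^{a_1}(I^{(2)})^{a_2} \cdots (I^{(d)})^{a_d}$. Then for $k = d \cdot d!$ one has $I^{(kn)} = (I^{(k)})^n$ for all $n \geq 1$. -/
/-- If the symbolic Rees algebra of `I` is generated in degrees at most `d`, i.e. each
symbolic power `J n = I^{(n)}` is the sum of products `I^{a₁}(I^{(2)})^{a₂}⋯(I^{(d)})^{a_d}`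
over tuples with `∑ i aᵢ = n`, then for `k = d·d!` one has `I^{(kn)} = (I^{(k)})^n`
for all `n ≥ 1`. -/
theorem symbolic_veronese_of_generation_type {R : Type*} [CommRing R]
    (I : Ideal R) (J : ℕ → Ideal R) (d : ℕ) (hd : 1 ≤ d)
    (hJ0 : J 0 = ⊤) (hJ1 : J 1 = I)
    (hgraded : ∀ a b : ℕ, J a * J b ≤ J (a + b))
    (hdesc : ∀ m n : ℕ, n ≤ m → J m ≤ J n)
    (hgen : ∀ n : ℕ, 1 ≤ n →
      J n = ⨆ (a : Fin d → ℕ) (_ : ∑ i : Fin d, (i.1 + 1) * a i = n),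
              ∏ i : Fin d, J (i.1 + 1) ^ a i) :
    ∀ n : ℕ, 1 ≤ n → J (d * d.factorial * n) = J (d * d.factorial) ^ n := by
  set F := d.factorial with hF
  set k := d * F with hk
  have hF1 : 1 ≤ F := Nat.one_le_iff_ne_zero.mpr (Nat.factorial_ne_zero d)
  have hk1 : 1 ≤ k := Nat.one_le_iff_ne_zero.mpr (by positivity)
  -- powers: J m ^ a ≤ J (m * a)
  have hpow : ∀ m a : ℕ, J m ^ a ≤ J (m * a) := by
    intro m a
    induction a with
    | zero => simp [hJ0]
    | succ a ih =>
      rw [pow_succ]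
      refine le_trans (mul_le_mul' ih le_rfl) (le_trans (hgraded _ _) (le_of_eq ?_))
      ring_nf
  -- products: ∏ J(w i) ^ b i ≤ J (∑ w i * b i)
  have hprod : ∀ (s : Finset (Fin d)) (b : Fin d → ℕ),
      ∏ i ∈ s, J (i.1 + 1) ^ b i ≤ J (∑ i ∈ s, (i.1 + 1) * b i) := by
    intro s b
    induction s using Finset.induction with
    | empty => simp [hJ0]
    | @insert x s hx ih =>
      rw [Finset.prod_insert hx, Finset.sum_insert hx]
      exact le_trans (mul_le_mul' (hpow _ _) ih) (hgraded _ _)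
  have prodmono : ∀ (s : Finset (Fin d)) (f g : Fin d → Ideal R),
      (∀ i ∈ s, f i ≤ g i) → ∏ i ∈ s, f i ≤ ∏ i ∈ s, g i := by
    intro s f g h
    induction s using Finset.induction with
    | empty => simp
    | @insert x s hx ih =>
      rw [Finset.prod_insert hx, Finset.prod_insert hx]
      exact mul_le_mul' (h x (Finset.mem_insert_self x s))
        (ih fun i hi => h i (Finset.mem_insert_of_mem hi))
  intro n hn
  obtain ⟨m, rfl⟩ := Nat.exists_eq_add_of_le hn
  refine le_antisymm ?_ (hpow k (1 + m))
  rw [hgen (k * (1 + m)) (Nat.one_le_iff_ne_zero.mpr (by positivity))]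
  refine iSup₂_le fun a ha => ?_
  -- decompose exponents
  set c : Fin d → ℕ := fun i => F / (i.1 + 1) with hc
  have hci : ∀ i : Fin d, (i.1 + 1) * c i = F := fun i =>
    Nat.mul_div_cancel' (Nat.dvd_factorial (Nat.succ_pos _) i.2)
  have hc1 : ∀ i : Fin d, 1 ≤ c i := by
    intro i
    rcases Nat.eq_zero_or_pos (c i) with h | h
    · exact absurd ((hci i).symm.trans (by rw [h, Nat.mul_zero])) (by omega)
    · exact h
  set q : Fin d → ℕ := fun i => a i / c i with hq
  set r : Fin d → ℕ := fun i => a i % c i with hr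
  have hdiv : ∀ i : Fin d, a i = c i * q i + r i := fun i => (Nat.div_add_mod (a i) (c i)).symm
  set Q := ∑ i : Fin d, q i with hQdef
  set Rw := ∑ i : Fin d, (i.1 + 1) * r i with hRwdef
  -- key numeric identity : F * Q + Rw = k * (1 + m)
  have hsum : F * Q + Rw = k * (1 + m) := by
    rw [← ha, Finset.mul_sum, ← Finset.sum_add_distrib]
    refine Finset.sum_congr rfl fun i _ => ?_
    rw [hdiv i, Nat.mul_add, ← Nat.mul_assoc, hci i]
  -- Rw < k
  have hRw : Rw < k := by
    have h1 : Rw ≤ ∑ _i : Fin d, (F - 1) := by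
      refine Finset.sum_le_sum fun i _ => ?_
      have h2 : r i ≤ c i - 1 := by
        have h := Nat.mod_lt (a i) (show 0 < c i from hc1 i)
        have h' : r i = a i % c i := rfl
        omega
      calc (i.1 + 1) * r i ≤ (i.1 + 1) * (c i - 1) := Nat.mul_le_mul_left _ h2
        _ = (i.1 + 1) * c i - (i.1 + 1) := by
            rw [Nat.mul_sub, Nat.mul_one]
        _ ≤ F - 1 := by rw [hci i]; omega
    have h3 : (∑ _i : Fin d, (F - 1)) = d * (F - 1) := by
      rw [Finset.sum_const, Finset.card_univ, Fintype.card_fin, smul_eq_mul]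
    have h4 : d * (F - 1) < d * F := by
      calc d * (F - 1) < d * (F - 1) + d := by omega
        _ ≤ d * F := by rw [← Nat.mul_succ]; exact Nat.mul_le_mul_left d (by omega)
    omega
  -- Q ≥ d * m + 1
  have hQ : d * m + 1 ≤ Q := by
    by_contra h
    have h1 : Q ≤ d * m := by omega
    have h2 : F * Q ≤ F * (d * m) := Nat.mul_le_mul_left _ h1
    have h3 : k * (1 + m) = F * (d * m) + k := by rw [hk]; ring
    omega
  set e := Q - d * m with he
  have he1 : 1 ≤ e := by omega
  have heQ : Q = d * m + e := by omega
  have hke : F * e + Rw = k := by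
    have : F * Q = F * (d * m) + F * e := by rw [heQ]; ring
    have h3 : k * (1 + m) = F * (d * m) + k := by rw [hk]; ring
    omega
  -- now the ideal-theoretic estimate
  have step1 : ∏ i : Fin d, J (i.1 + 1) ^ a i ≤ J F ^ Q * J Rw := by
    have hsplit : ∏ i : Fin d, J (i.1 + 1) ^ a i
        = (∏ i : Fin d, J (i.1 + 1) ^ (c i * q i)) * ∏ i : Fin d, J (i.1 + 1) ^ r i := by
      rw [← Finset.prod_mul_distrib]
      exact Finset.prod_congr rfl fun i _ => by rw [← pow_add, ← hdiv i]
    rw [hsplit]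
    refine mul_le_mul' ?_ (hprod _ _)
    calc (∏ i : Fin d, J (i.1 + 1) ^ (c i * q i)) ≤ ∏ i : Fin d, J F ^ q i := by
          refine prodmono _ _ _ fun i _ => ?_
          rw [pow_mul]
          refine pow_le_pow_left' (le_trans (hpow _ _) ?_) (q i)
          rw [hci i]
      _ = J F ^ Q := by rw [Finset.prod_pow_eq_pow_sum]
  have step2 : J F ^ Q * J Rw ≤ J k ^ (1 + m) := by
    have hQpow : J F ^ Q = (J F ^ d) ^ m * J F ^ e := by
      rw [← pow_mul, ← pow_add, ← heQ]
    rw [hQpow]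
    have h1 : (J F ^ d) ^ m ≤ J k ^ m := by
      refine pow_le_pow_left' (le_trans (hpow F d) (le_of_eq ?_)) m
      rw [hk, Nat.mul_comm]
    have h2 : J F ^ e * J Rw ≤ J k := by
      refine le_trans (mul_le_mul' (hpow F e) le_rfl) (le_trans (hgraded _ _) (le_of_eq ?_))
      rw [hke]
    calc (J F ^ d) ^ m * J F ^ e * J Rw = (J F ^ d) ^ m * (J F ^ e * J Rw) := by ring
      _ ≤ J k ^ m * J k := mul_le_mul' h1 h2
      _ = J k ^ (1 + m) := by rw [pow_add, pow_one, mul_comm]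
  exact le_trans step1 step2
end

section
/- Let $I$ be an ideal of a commutative ring whose symbolic Rees algebra has generation type $d$, meaning $I^{(n)} = \sum_{a_1 + 2a_2 + \cdots + d a_d = n} I^{a_1}(I^{(2)})^{a_2} \cdots (I^{(d)})^{a_d}$ for all $n \geq 1$. Then $I^{(dn - d + 1)} \subseteq I^n$ for all $n \geq 1$. -/
/-!
Every generator `∏ᵢ (I^{(i)})^{aᵢ}` of `I^{(dn-d+1)}` lies in `I^{a₁ + ⋯ + a_d}`, since each
`I^{(i)} ⊆ I`. The weights are at most `d`, so `d (a₁ + ⋯ + a_d) ≥ ∑ i aᵢ = dn - d + 1 > d (n - 1)`,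
which forces `a₁ + ⋯ + a_d ≥ n`.
-/

theorem Ideal.prod_pow_le_pow_sum {R ι : Type*} [CommSemiring R] {I : Ideal R}
    {J : ι → Ideal R} {s : Finset ι} (hJ : ∀ i ∈ s, J i ≤ I) (a : ι → ℕ) :
    ∏ i ∈ s, J i ^ a i ≤ I ^ ∑ i ∈ s, a i := by
  rw [← Finset.prod_pow_eq_pow_sum]
  exact Finset.prod_le_prod' fun i hi => Ideal.pow_right_mono (hJ i hi) (a i)

theorem Fin.sum_succ_mul_le_mul_sum {d : ℕ} (a : Fin d → ℕ) :
    ∑ i : Fin d, (i.1 + 1) * a i ≤ d * ∑ i : Fin d, a i := by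
  rw [Finset.mul_sum]
  exact Finset.sum_le_sum fun i _ => Nat.mul_le_mul_right _ i.2

theorem le_sum_of_weighted_sum_eq {d n : ℕ} (a : Fin d → ℕ)
    (ha : ∑ i : Fin d, (i.1 + 1) * a i = d * n - d + 1) : n ≤ ∑ i : Fin d, a i := by
  have hle := ha ▸ Fin.sum_succ_mul_le_mul_sum a
  by_contra! hlt
  have : d * ∑ i : Fin d, a i ≤ d * n - d :=
    (Nat.mul_le_mul_left d (Nat.le_sub_one_of_lt hlt)).trans_eq (Nat.mul_sub_one d n)
  omega

theorem symbolicPower_le_pow_of_generation_type_general {R : Type*} [CommRing R]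
    (I : Ideal R) (J : ℕ → Ideal R) (d : ℕ)
    (hsub : ∀ i : ℕ, 1 ≤ i → J i ≤ I)
    (hgen : ∀ n : ℕ, 1 ≤ n →
      J n = ⨆ (a : Fin d → ℕ) (_ : ∑ i : Fin d, (i.1 + 1) * a i = n),
              ∏ i : Fin d, J (i.1 + 1) ^ a i) :
    ∀ n : ℕ, 1 ≤ n → J (d * n - d + 1) ≤ I ^ n := by
  intro n _
  rw [hgen _ (Nat.le_add_left 1 _)]
  refine iSup₂_le fun a ha => ?_
  calc ∏ i : Fin d, J (i.1 + 1) ^ a i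
      ≤ I ^ ∑ i : Fin d, a i :=
        Ideal.prod_pow_le_pow_sum (fun i _ => hsub _ (Nat.le_add_left 1 _)) a
    _ ≤ I ^ n := Ideal.pow_le_pow_right (le_sum_of_weighted_sum_eq a ha)

/-- If the symbolic Rees algebra of `I` has generation type `d`, then
`I^{(dn-d+1)} ⊆ I^n` for all `n ≥ 1`. -/
theorem symbolicPower_le_pow_of_generation_type {R : Type*} [CommRing R]
    (I : Ideal R) (J : ℕ → Ideal R) (d : ℕ) (hd : 1 ≤ d)
    (hJ1 : J 1 = I) (hsub : ∀ i : ℕ, 1 ≤ i → J i ≤ I)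
    (hgen : ∀ n : ℕ, 1 ≤ n →
      J n = ⨆ (a : Fin d → ℕ) (_ : ∑ i : Fin d, (i.1 + 1) * a i = n),
              ∏ i : Fin d, J (i.1 + 1) ^ a i) :
    ∀ n : ℕ, 1 ≤ n → J (d * n - d + 1) ≤ I ^ n :=
  symbolicPower_le_pow_of_generation_type_general I J d hsub hgen
end

section
/- Let $I_{n,h} = \bigcap_{1 \leq i_1 < \cdots < i_h \leq n} (x_{i_1}, \dots, x_{i_h})$ be the monomial star configuration ideal in $k[x_1, \dots, x_n]$. Then the least degree of a nonzero element of the $m$-th symbolic power is $\alpha(I_{n,h}^{(m)}) = m + (n - h)\lceil m/h \rceil$. -/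
open MvPolynomial

/-- The `m`-th symbolic power of the monomial star configuration ideal
`I_{n,h} = ⋂ (x_{i₁},…,x_{i_h})`: the intersection of the `m`-th powers of the
ideals generated by `h`-element subsets of the variables. -/
noncomputable def starSymbolicPower (k : Type*) [Field k] (n h m : ℕ) :
    Ideal (MvPolynomial (Fin n) k) :=
  ⨅ (s : Finset (Fin n)) (_ : s.card = h),
    (Ideal.span ((fun i => (X i : MvPolynomial (Fin n) k)) '' ↑s)) ^ m

/-- `α(J)`: the least degree of a nonzero homogeneous element of `J`. -/
noncomputable def alphaDeg {k : Type*} [Field k] {N : ℕ} (J : Ideal (MvPolynomial (Fin N) k)) : ℕ :=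
  sInf {d : ℕ | ∃ f ∈ J, f ≠ 0 ∧ MvPolynomial.IsHomogeneous f d}

/-!
The symbolic power is a monomial ideal: a polynomial lies in it iff each of its exponent vectors
`a` satisfies `∑ i ∈ s, a i ≥ m` for every `h`-set `s`, so `α` is the least `∑ i, a i` over such
vectors. With `c = ⌈m/h⌉`, at most `h` coordinates of such an `a` are `< c`, since `h` of them
would sum to at most `h (c - 1) < m`. An `h`-set `s` containing them gives
`∑ i, a i ≥ m + (n - h) c`, and the vector equal to `c` except for `h c - m` coordinates equal to
`c - 1` attains the bound.
-/

open Finset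

section Combinatorics

variable {ι : Type*} [Fintype ι] {h m : ℕ}

theorem add_mul_ceilDiv_le_sum {a : ι → ℕ} (hh : 0 < h) (hι : h ≤ Fintype.card ι)
    (ha : ∀ s : Finset ι, #s = h → m ≤ ∑ i ∈ s, a i) :
    m + (Fintype.card ι - h) * (m ⌈/⌉ h) ≤ ∑ i, a i := by
  classical
  set c := m ⌈/⌉ h
  set L := univ.filter fun i => a i < c
  have hL : #L ≤ h := by
    by_contra! hL
    obtain ⟨t, htL, ht⟩ := exists_subset_card_eq hL.le
    have hmt : m ≤ h * (c - 1) :=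
      calc m ≤ ∑ i ∈ t, a i := ha t ht
        _ ≤ ∑ _i ∈ t, (c - 1) :=
          sum_le_sum fun i hi => Nat.le_sub_one_of_lt (mem_filter.1 (htL hi)).2
        _ = h * (c - 1) := by rw [sum_const, ht, smul_eq_mul]
    have hc : c ≤ c - 1 := (ceilDiv_le_iff_le_mul hh).2 hmt
    have hL0 : L = ∅ := filter_eq_empty_iff.2 fun i _ => by omega
    simp [hL0] at hL
  obtain ⟨s, hLs, -, hs⟩ := exists_subsuperset_card_eq (subset_univ L) hL (by simpa using hι)
  calc m + (Fintype.card ι - h) * c ≤ ∑ i ∈ s, a i + ∑ i ∈ sᶜ, a i := by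
        refine add_le_add (ha s hs) ?_
        calc (Fintype.card ι - h) * c = ∑ _i ∈ sᶜ, c := by
              rw [sum_const, card_compl, hs, smul_eq_mul]
          _ ≤ ∑ i ∈ sᶜ, a i := sum_le_sum fun i hi =>
              not_lt.1 fun hlt => mem_compl.1 hi (hLs (mem_filter.2 ⟨mem_univ i, hlt⟩))
    _ = ∑ i, a i := sum_add_sum_compl s a

theorem exists_forall_card_eq_le_sum_and_sum_eq (hh : 0 < h) (hι : h ≤ Fintype.card ι) :
    ∃ a : ι → ℕ, (∀ s : Finset ι, #s = h → m ≤ ∑ i ∈ s, a i) ∧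
      ∑ i, a i = m + (Fintype.card ι - h) * (m ⌈/⌉ h) := by
  classical
  set c := m ⌈/⌉ h
  have hmc : m ≤ h * c := (ceilDiv_le_iff_le_mul hh).1 le_rfl
  have hcm : h * c ≤ m + h - 1 := by
    rw [mul_comm]; exact Nat.div_mul_le_self (m + h - 1) h
  obtain ⟨T, -, hT⟩ := exists_subset_card_eq (s := (univ : Finset ι)) (n := h * c - m)
    (by rw [card_univ]; omega)
  set a : ι → ℕ := fun i => if i ∈ T then c - 1 else c
  have hcT : ∀ s : Finset ι, ∑ i ∈ s, a i + #(s ∩ T) = #s * c := by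
    intro s
    have hpt : ∀ i, a i + (if i ∈ T then 1 else 0) = c := by
      intro i
      by_cases hi : i ∈ T
      · have hc : 0 < c := Nat.pos_of_ne_zero fun hc => by
          simp only [hc, mul_zero, Nat.zero_sub, card_eq_zero] at hT
          simp [hT] at hi
        simp only [a, hi, if_true]
        omega
      · simp [a, hi]
    rw [← filter_mem_eq_inter, card_filter, ← sum_add_distrib, sum_congr rfl fun i _ => hpt i,
      sum_const, smul_eq_mul]
  refine ⟨a, fun s hs => ?_, ?_⟩
  · have hsT := hcT s
    have : #(s ∩ T) ≤ #T := card_le_card inter_subset_right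
    rw [hs] at hsT
    omega
  · have hunivT := hcT univ
    have hsplit : (Fintype.card ι - h) * c + h * c = Fintype.card ι * c := by
      rw [← add_mul, Nat.sub_add_cancel hι]
    rw [univ_inter, card_univ] at hunivT
    omega

end Combinatorics

namespace MvPolynomial

variable {σ R : Type*} [CommSemiring R]

variable (R) in
def partialDegreeGeIdeal (s : Finset σ) (m : ℕ) : Ideal (MvPolynomial σ R) where
  carrier := {f | ∀ b ∈ f.support, m ≤ ∑ i ∈ s, b i}
  zero_mem' := by simp
  add_mem' {f g} hf hg b hb := by
    classical
    rcases mem_union.1 (support_add hb) with hb | hb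
    exacts [hf b hb, hg b hb]
  smul_mem' p f hf b hb := by
    classical
    obtain ⟨u, -, v, hv, rfl⟩ := mem_add.1 (support_mul p f hb)
    simpa [sum_add_distrib] using le_add_left (hf v hv)

theorem mem_partialDegreeGeIdeal {s : Finset σ} {m : ℕ} {f : MvPolynomial σ R} :
    f ∈ partialDegreeGeIdeal R s m ↔ ∀ b ∈ f.support, m ≤ ∑ i ∈ s, b i := Iff.rfl

theorem mul_mem_partialDegreeGeIdeal {s : Finset σ} {m m' : ℕ} {f g : MvPolynomial σ R}
    (hf : f ∈ partialDegreeGeIdeal R s m) (hg : g ∈ partialDegreeGeIdeal R s m') :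
    f * g ∈ partialDegreeGeIdeal R s (m + m') := by
  classical
  intro b hb
  obtain ⟨u, hu, v, hv, rfl⟩ := mem_add.1 (support_mul f g hb)
  simpa [sum_add_distrib] using add_le_add (hf u hu) (hg v hv)

theorem X_mem_partialDegreeGeIdeal {s : Finset σ} {i : σ} (hi : i ∈ s) :
    (X i : MvPolynomial σ R) ∈ partialDegreeGeIdeal R s 1 := by
  classical
  intro b hb
  rw [mem_support_iff, coeff_X] at hb
  obtain rfl : Finsupp.single i 1 = b := by by_contra hne; simp [hne] at hb
  simpa using single_le_sum (f := fun j => (Finsupp.single i 1 : σ →₀ ℕ) j) (by simp) hi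

theorem span_X_image_pow_le_partialDegreeGeIdeal (s : Finset σ) (m : ℕ) :
    Ideal.span ((X : σ → MvPolynomial σ R) '' s) ^ m ≤ partialDegreeGeIdeal R s m := by
  induction m with
  | zero => intro f _ b _; exact Nat.zero_le _
  | succ m ih =>
    have hspan : Ideal.span ((X : σ → MvPolynomial σ R) '' s) ≤ partialDegreeGeIdeal R s 1 :=
      Ideal.span_le.2 <| by rintro _ ⟨i, hi, rfl⟩; exact X_mem_partialDegreeGeIdeal hi
    rw [pow_succ]
    exact Ideal.mul_le.2 fun f hf g hg => mul_mem_partialDegreeGeIdeal (ih hf) (hspan hg)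

theorem monomial_one_mem_span_X_image_pow [Fintype σ] {s : Finset σ} {m : ℕ} {b : σ →₀ ℕ}
    (hb : m ≤ ∑ i ∈ s, b i) :
    monomial b (1 : R) ∈ Ideal.span ((X : σ → MvPolynomial σ R) '' s) ^ m := by
  classical
  rw [monomial_eq, C_1, one_mul, Finsupp.prod_fintype _ _ fun _ => pow_zero _,
    ← prod_mul_prod_compl s]
  refine Ideal.mul_mem_right _ _ (Ideal.pow_le_pow_right hb ?_)
  rw [← prod_pow_eq_pow_sum]
  exact Ideal.prod_mem_prod fun i hi => Ideal.pow_mem_pow (Ideal.subset_span (Set.mem_image_of_mem X hi)) _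

theorem span_X_image_pow_eq [Fintype σ] (s : Finset σ) (m : ℕ) :
    Ideal.span ((X : σ → MvPolynomial σ R) '' s) ^ m = partialDegreeGeIdeal R s m := by
  refine le_antisymm (span_X_image_pow_le_partialDegreeGeIdeal s m) fun f hf => ?_
  rw [f.as_sum]
  refine Ideal.sum_mem _ fun b hb => ?_
  rw [← mul_one (coeff b f), ← C_mul_monomial]
  exact Ideal.mul_mem_left _ _ (monomial_one_mem_span_X_image_pow (hf b hb))

end MvPolynomial

theorem mem_starSymbolicPower {k : Type*} [Field k] {n h m : ℕ} {f : MvPolynomial (Fin n) k} :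
    f ∈ starSymbolicPower k n h m ↔
      ∀ b ∈ f.support, ∀ s : Finset (Fin n), #s = h → m ≤ ∑ i ∈ s, b i := by
  simp only [starSymbolicPower, Submodule.mem_iInf, span_X_image_pow_eq, mem_partialDegreeGeIdeal]
  exact ⟨fun H b hb s hs => H s hs b hb, fun H s hs b hb => H b hb s hs⟩

theorem alphaDeg_eq_of_mem_iff {k : Type*} [Field k] {N : ℕ} {J : Ideal (MvPolynomial (Fin N) k)}
    {P : (Fin N →₀ ℕ) → Prop} (hJ : ∀ f, f ∈ J ↔ ∀ b ∈ f.support, P b) {d : ℕ}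
    (hP : ∃ b, P b ∧ b.degree = d) (hd : ∀ b, P b → d ≤ b.degree) :
    alphaDeg J = d := by
  obtain ⟨b, hb, rfl⟩ := hP
  have hmem : ∃ f ∈ J, f ≠ 0 ∧ f.IsHomogeneous b.degree :=
    ⟨monomial b 1, (hJ _).2 (by simpa [support_monomial] using hb), by simp,
      isHomogeneous_monomial _ rfl⟩
  refine le_antisymm (Nat.sInf_le hmem) (le_csInf ⟨_, hmem⟩ ?_)
  rintro d ⟨f, hf, hf0, hfd⟩
  obtain ⟨b', hb'⟩ := support_nonempty.2 hf0
  rw [hfd.degree_eq_sum_deg_support hb']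
  exact hd b' ((hJ f).1 hf b' hb')

theorem alphaDeg_starSymbolicPower_general (k : Type*) [Field k] (n h m : ℕ)
    (hh : 1 ≤ h) (hhn : h ≤ n - 1) :
    alphaDeg (starSymbolicPower k n h m) = m + (n - h) * ((m + h - 1) / h) := by
  have hn : h ≤ Fintype.card (Fin n) := by rw [Fintype.card_fin]; omega
  rw [← Nat.ceilDiv_eq_add_pred_div]
  refine alphaDeg_eq_of_mem_iff (fun f => mem_starSymbolicPower) ?_ fun b hb => ?_
  · obtain ⟨a, ha, hsum⟩ := exists_forall_card_eq_le_sum_and_sum_eq (m := m) hh hn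
    exact ⟨Finsupp.equivFunOnFinite.symm a, ha, by simpa [Finsupp.degree_eq_sum] using hsum⟩
  · simpa [Finsupp.degree_eq_sum] using add_mul_ceilDiv_le_sum hh hn hb

/-- For the monomial star configuration ideal `I_{n,h}`, the least degree of a nonzero
element of the `m`-th symbolic power is `α(I_{n,h}^{(m)}) = m + (n-h)⌈m/h⌉`, where the
ceiling is written `(m + h - 1)/h` in natural division. -/
theorem alphaDeg_starSymbolicPower (k : Type*) [Field k] (n h m : ℕ)
    (hh : 1 ≤ h) (hhn : h ≤ n - 1) (hm : 1 ≤ m) :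
    alphaDeg (starSymbolicPower k n h m) = m + (n - h) * ((m + h - 1) / h) :=
  alphaDeg_starSymbolicPower_general k n h m hh hhn
end

section
/- With $I_{n,h}$ the monomial star configuration ideal in $k[x_1,\dots,x_n]$, the monomial $x_1 x_2 \cdots x_n$ lies in $I_{n,h}^{(h)}$ but cannot be written as a product $m_1 \cdots m_s$ with $s \geq 2$, where each $m_j$ is a squarefree monomial of the form $x_{j,1}\cdots x_{j, n-h+a_j}$ lying in $I_{n,h}^{(a_j)}$ with $a_j \geq 1$ and $\sum_j a_j = h$. -/
open MvPolynomial

lemma prod_mem_pow_card {R ι : Type*} [CommRing R] (I : Ideal R) (s : Finset ι)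
    (f : ι → R) (hf : ∀ i ∈ s, f i ∈ I) : ∏ i ∈ s, f i ∈ I ^ s.card := by
  classical
  induction s using Finset.induction_on with
  | empty => simp
  | @insert a s hx ih =>
    rw [Finset.prod_insert hx, Finset.card_insert_of_notMem hx, pow_succ, mul_comm]
    exact Ideal.mul_mem_mul (hf a (Finset.mem_insert_self a s))
      (ih fun i hi => hf i (Finset.mem_insert_of_mem hi))

/-- The monomial `x₁⋯xₙ` lies in `I_{n,h}^{(h)}` but cannot be factored as a product
`m₁⋯m_s` with `s ≥ 2` of squarefree monomials `m_j` in `n - h + a_j` variables with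
`m_j ∈ I_{n,h}^{(a_j)}`, `a_j ≥ 1` and `∑ a_j = h`. -/
theorem prod_X_mem_and_indecomposable (k : Type*) [Field k] (n h : ℕ)
    (hh : 1 ≤ h) (hhn : h ≤ n - 1) :
    ((∏ i : Fin n, (X i : MvPolynomial (Fin n) k)) ∈ starSymbolicPower k n h h) ∧
    ¬ ∃ (s : ℕ) (_ : 2 ≤ s) (a : Fin s → ℕ) (T : Fin s → Finset (Fin n)),
        (∀ j, 1 ≤ a j) ∧ (∑ j, a j = h) ∧
        (∀ j, (T j).card = n - h + a j) ∧
        (∀ j, (∏ i ∈ T j, (X i : MvPolynomial (Fin n) k)) ∈ starSymbolicPower k n h (a j)) ∧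
        (∏ j : Fin s, ∏ i ∈ T j, (X i : MvPolynomial (Fin n) k)) =
          ∏ i : Fin n, (X i : MvPolynomial (Fin n) k) := by
  have hn2 : 2 ≤ n := by omega
  constructor
  · rw [starSymbolicPower]
    refine Ideal.mem_iInf.2 fun t => Ideal.mem_iInf.2 fun ht => ?_
    rw [← Finset.prod_mul_prod_compl t]
    refine Ideal.mul_mem_right _ _ ?_
    have := prod_mem_pow_card
      (Ideal.span ((fun i => (X i : MvPolynomial (Fin n) k)) '' ↑t)) t
      (fun i => (X i : MvPolynomial (Fin n) k))
      (fun i hi => Ideal.subset_span ⟨i, hi, rfl⟩)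
    rwa [ht] at this
  · rintro ⟨s, hs, a, T, ha, hsum, hcard, -, hprod⟩
    -- apply the algebra map sending every X i to Polynomial.X
    have := congrArg (aeval (fun _ : Fin n => (Polynomial.X : Polynomial k))) hprod
    simp only [map_prod, aeval_X, Finset.prod_const, Finset.card_univ,
      Fintype.card_fin] at this
    rw [Finset.prod_pow_eq_pow_sum] at this
    have hdeg := congrArg Polynomial.natDegree this
    rw [Polynomial.natDegree_pow, Polynomial.natDegree_pow, Polynomial.natDegree_X,
      mul_one, mul_one] at hdeg
    have hsum' : ∑ j, (T j).card = s * (n - h) + h := by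
      calc ∑ j, (T j).card = ∑ j : Fin s, (n - h + a j) := by
            exact Finset.sum_congr rfl fun j _ => hcard j
        _ = s * (n - h) + h := by
            rw [Finset.sum_add_distrib, Finset.sum_const, Finset.card_univ,
              Fintype.card_fin, smul_eq_mul, hsum]
    have h2 : 2 * (n - h) ≤ s * (n - h) := Nat.mul_le_mul_right _ hs
    omega
end

section
/- Let $I$ be an ideal in a commutative ring, $h \geq 2$, $q \geq 1$ integers, and suppose: (i) $I^{(hn - h + 1)} = \sum_{a=0}^{A} (I^{(h)})^{n-1-a} I^{(ha+1)}$ for all $n$ with $hn - h + 1 \geq hA + 1$; (ii) $I^{(hq - h + 1)} \subseteq I^q$; (iii) $I^{(h m)} \subseteq I^m$ for all $m \geq 1$; and (iv) $q \geq A + 1$. Then $I^{(hn - h + 1)} \subseteq I^n$ for all $n \geq q$. -/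
/-- If the symbolic powers of `I` form a graded, descending family with
`I^{(hn-h+1)} = ∑_{a=0}^{A} (I^{(h)})^{n-1-a} I^{(ha+1)}` for all `n` with
`hn - h + 1 ≥ hA + 1`, and `I^{(hq-h+1)} ⊆ I^q`, `I^{(hm)} ⊆ I^m` for all `m ≥ 1`, and
`q ≥ A + 1`, then `I^{(hn-h+1)} ⊆ Iⁿ` for all `n ≥ q`. -/
theorem symbolicPower_le_pow_of_decomposition {R : Type*} [CommRing R]
    (I : Ideal R) (J : ℕ → Ideal R) (h q A : ℕ) (hh : 2 ≤ h) (hq : 1 ≤ q)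
    (hJ1 : J 1 = I)
    (hgraded : ∀ a b : ℕ, J a * J b ≤ J (a + b))
    (hdesc : ∀ m n : ℕ, n ≤ m → J m ≤ J n)
    (hdecomp : ∀ n : ℕ, h * A + 1 ≤ h * n - h + 1 →
      J (h * n - h + 1) = ⨆ a ∈ Finset.range (A + 1), J h ^ (n - 1 - a) * J (h * a + 1))
    (hcontq : J (h * q - h + 1) ≤ I ^ q)
    (hcontm : ∀ m : ℕ, 1 ≤ m → J (h * m) ≤ I ^ m)
    (hqA : A + 1 ≤ q) :
    ∀ n : ℕ, q ≤ n → J (h * n - h + 1) ≤ I ^ n := by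
  intro n hn
  obtain ⟨m, rfl⟩ : ∃ m, n = m + 1 := ⟨n - 1, by omega⟩
  have hJh : J h ≤ I := hJ1 ▸ hdesc h 1 (by omega)
  have hJhpow : ∀ k : ℕ, J h ^ k ≤ I ^ k := fun k => Ideal.pow_right_mono hJh k
  -- key graded-power estimate
  have key : ∀ k c : ℕ, J h ^ k * J c ≤ J (h * k + c) := by
    intro k
    induction k with
    | zero => intro c; simp
    | succ k ih =>
      intro c
      calc J h ^ (k + 1) * J c = J h ^ k * J c * J h := by ring
        _ ≤ J (h * k + c) * J h := Ideal.mul_mono_left (ih c)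
        _ ≤ J (h * k + c + h) := hgraded _ _
        _ = J (h * (k + 1) + c) := by ring_nf
  have hmul : h * (m + 1) - h + 1 = h * m + 1 := by
    have : h * (m + 1) = h * m + h := by ring
    omega
  have hd := hdecomp (m + 1) (by
    have := Nat.mul_le_mul_left h (show A ≤ m by omega)
    omega)
  rw [hd]
  apply iSup₂_le
  intro a ha
  have haA : a ≤ A := Nat.lt_succ_iff.mp (Finset.mem_range.mp ha)
  obtain ⟨b, hb⟩ : ∃ b, q = b + a + 1 := ⟨q - 1 - a, by omega⟩
  have hma : m + 1 - 1 - a = (m + 1 - q) + b := by omega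
  rw [hma, pow_add, mul_assoc]
  have hqb : h * b + (h * a + 1) = h * q - h + 1 := by
    have : h * q = h * b + h * a + h := by rw [hb]; ring
    omega
  calc J h ^ (m + 1 - q) * (J h ^ b * J (h * a + 1))
      ≤ I ^ (m + 1 - q) * (J h ^ b * J (h * a + 1)) :=
        Ideal.mul_mono_left (hJhpow _)
    _ ≤ I ^ (m + 1 - q) * J (h * q - h + 1) := by
        apply Ideal.mul_mono_right
        rw [← hqb]; exact key b (h * a + 1)
    _ ≤ I ^ (m + 1 - q) * I ^ q := Ideal.mul_mono_right hcontq
    _ = I ^ (m + 1) := by rw [← pow_add]; congr 1; omega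
end
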